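/- Fix a real number R and ρ ∈ [−1,0]. Then E_c^{ML}(R,Q) ≥ min over pairs (T,V) with supp(V) ⊆ supp(Q) of { D(T∘V‖Q∘P) − ρ·( R − D(T∘V‖T×Q) ) }. In the case of equality, every minimizer of E_c^{ML}(R,Q) also minimizes the right-hand side and satisfies D(T∘V‖T×Q) = R when ρ ∈ (−1,0), respectively D(T∘V‖T×Q) ≥ R when ρ = 0 and D(T∘V‖T×Q) ≤ R when ρ = −1. Conversely, if the right-hand minimum is attained by some (T_ρ,V_ρ) satisfying the corresponding condition (D(T_ρ∘V_ρ‖T_ρ×Q) = R, or ≥ R for ρ = 0, or ≤ R for ρ = −1), then (T_ρ,V_ρ) also attains the minimum defining E_c^{ML}(R,Q) and equality holds. -/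

import Mathlib

open scoped BigOperators
open Filter Topology

/-- `f` is a probability mass function on a finite alphabet. -/
def IsPMF {α : Type*} [Fintype α] (f : α → ℝ) : Prop :=
  (∀ a, 0 ≤ f a) ∧ ∑ a, f a = 1

/-- `P` is a discrete memoryless channel from `𝓧` to `𝓨`. -/
def IsChannel {𝓧 𝓨 : Type*} [Fintype 𝓧] [Fintype 𝓨] (P : 𝓧 → 𝓨 → ℝ) : Prop :=
  ∀ x, IsPMF (P x)

/-- `V` is a conditional pmf on `𝓧` given `𝓨`. -/
def IsCondPMF {𝓧 𝓨 : Type*} [Fintype 𝓧] [Fintype 𝓨] (V : 𝓨 → 𝓧 → ℝ) : Prop :=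
  ∀ y, IsPMF (V y)

/-- one term `s·log(s/t)` of a KL divergence, with the conventions
    `0·log(0/t) = 0` and `s·log(s/0) = +∞` for `s > 0`. -/
noncomputable def klTerm (s t : ℝ) : EReal :=
  if s = 0 then 0 else if t = 0 then ⊤ else ((s * Real.log (s / t) : ℝ) : EReal)

/-- `D(T∘V ‖ Q∘P)`. -/
noncomputable def DQP {𝓧 𝓨 : Type*} [Fintype 𝓧] [Fintype 𝓨]
    (T : 𝓨 → ℝ) (V : 𝓨 → 𝓧 → ℝ) (Q : 𝓧 → ℝ) (P : 𝓧 → 𝓨 → ℝ) : EReal :=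
  ∑ y, ∑ x, klTerm (T y * V y x) (Q x * P x y)

/-- `D(T∘V ‖ T×Q)`. -/
noncomputable def DTQ {𝓧 𝓨 : Type*} [Fintype 𝓧] [Fintype 𝓨]
    (T : 𝓨 → ℝ) (V : 𝓨 → 𝓧 → ℝ) (Q : 𝓧 → ℝ) : EReal :=
  ∑ y, ∑ x, klTerm (T y * V y x) (T y * Q x)

/-- Gallager's function `E₀(ρ,Q)` (for `ρ > −1`). -/
noncomputable def E0 {𝓧 𝓨 : Type*} [Fintype 𝓧] [Fintype 𝓨]
    (ρ : ℝ) (Q : 𝓧 → ℝ) (P : 𝓧 → 𝓨 → ℝ) : ℝ :=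
  - Real.log (∑ y, (∑ x, Q x * P x y ^ (1 / (1 + ρ))) ^ (1 + ρ))

/-- The joint distribution `T_ρ∘V_ρ` on `𝓧 × 𝓨` (for `ρ > −1`). -/
noncomputable def Jrho {𝓧 𝓨 : Type*} [Fintype 𝓧] [Fintype 𝓨]
    (ρ : ℝ) (Q : 𝓧 → ℝ) (P : 𝓧 → 𝓨 → ℝ) (x : 𝓧) (y : 𝓨) : ℝ :=
  Q x * P x y ^ (1 / (1 + ρ)) * (∑ a, Q a * P a y ^ (1 / (1 + ρ))) ^ ρ /
    ∑ y', (∑ a, Q a * P a y' ^ (1 / (1 + ρ))) ^ (1 + ρ)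

/-- `max_{x : Q(x) > 0} P(y|x)`. -/
noncomputable def maxP {𝓧 𝓨 : Type*} (Q : 𝓧 → ℝ) (P : 𝓧 → 𝓨 → ℝ) (y : 𝓨) : ℝ :=
  ⨆ x : {x // 0 < Q x}, P x.1 y

/-- `E₀(−1,Q) = −log ∑_y max_{x : Q(x)>0} P(y|x)`. -/
noncomputable def E0m1 {𝓧 𝓨 : Type*} [Fintype 𝓧] [Fintype 𝓨]
    (Q : 𝓧 → ℝ) (P : 𝓧 → 𝓨 → ℝ) : ℝ :=
  - Real.log (∑ y, maxP Q P y)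

/-- `E₀(ρ,Q)` extended to `ρ = −1`. -/
noncomputable def E0full {𝓧 𝓨 : Type*} [Fintype 𝓧] [Fintype 𝓨]
    (ρ : ℝ) (Q : 𝓧 → ℝ) (P : 𝓧 → 𝓨 → ℝ) : ℝ :=
  if ρ = -1 then E0m1 Q P else E0 ρ Q P

/-- `T_{−1}(y) ∝ max_{a : Q(a)>0} P(y|a)`. -/
noncomputable def Tm1 {𝓧 𝓨 : Type*} [Fintype 𝓧] [Fintype 𝓨]
    (Q : 𝓧 → ℝ) (P : 𝓧 → 𝓨 → ℝ) (y : 𝓨) : ℝ :=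
  maxP Q P y / ∑ y', maxP Q P y'

/-- `V` is admissible at `ρ = −1`: `V(x|y) = 0` for every `x` outside
    `argmax_{a : Q(a)>0} P(y|a)`. -/
def AdmissibleAtM1 {𝓧 𝓨 : Type*} [Fintype 𝓧] [Fintype 𝓨]
    (Q : 𝓧 → ℝ) (P : 𝓧 → 𝓨 → ℝ) (V : 𝓨 → 𝓧 → ℝ) : Prop :=
  ∀ y x, ¬ (0 < Q x ∧ ∀ a, 0 < Q a → P a y ≤ P x y) → V y x = 0

/-- the error exponent `E_e(R,Q)`. -/
noncomputable def Ee {𝓧 𝓨 : Type*} [Fintype 𝓧] [Fintype 𝓨]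
    (R : ℝ) (Q : 𝓧 → ℝ) (P : 𝓧 → 𝓨 → ℝ) : EReal :=
  sInf {v | ∃ T : 𝓨 → ℝ, ∃ V : 𝓨 → 𝓧 → ℝ, IsPMF T ∧ IsCondPMF V ∧
    v = DQP T V Q P + max (DTQ T V Q - (R : EReal)) 0}

/-- the ML correct-decoding exponent `E_c^{ML}(R,Q)`. -/
noncomputable def EcML {𝓧 𝓨 : Type*} [Fintype 𝓧] [Fintype 𝓨]
    (R : ℝ) (Q : 𝓧 → ℝ) (P : 𝓧 → 𝓨 → ℝ) : EReal :=
  sInf {v | ∃ T : 𝓨 → ℝ, ∃ V : 𝓨 → 𝓧 → ℝ, IsPMF T ∧ IsCondPMF V ∧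
    v = DQP T V Q P + max ((R : EReal) - DTQ T V Q) 0}

/-- the strict correct-decoding exponent `E_c(R,Q)` (`+∞` if infeasible). -/
noncomputable def Ec {𝓧 𝓨 : Type*} [Fintype 𝓧] [Fintype 𝓨]
    (R : ℝ) (Q : 𝓧 → ℝ) (P : 𝓧 → 𝓨 → ℝ) : EReal :=
  sInf {v | ∃ T : 𝓨 → ℝ, ∃ V : 𝓨 → 𝓧 → ℝ, IsPMF T ∧ IsCondPMF V ∧
    (R : EReal) ≤ DTQ T V Q ∧ v = DQP T V Q P}

/-- the mutual information `I(Q∘P)`. -/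
noncomputable def MI {𝓧 𝓨 : Type*} [Fintype 𝓧] [Fintype 𝓨]
    (Q : 𝓧 → ℝ) (P : 𝓧 → 𝓨 → ℝ) : ℝ :=
  ∑ x, ∑ y, if Q x * P x y = 0 then 0
    else Q x * P x y * Real.log (P x y / ∑ a, Q a * P a y)

/-- the capacity `C(Z)` of the channel restricted to input letters in `Z`. -/
noncomputable def capacity {𝓧 𝓨 : Type*} [Fintype 𝓧] [Fintype 𝓨]
    (P : 𝓧 → 𝓨 → ℝ) (Z : Set 𝓧) : ℝ :=
  sSup {c | ∃ Q' : 𝓧 → ℝ, IsPMF Q' ∧ (∀ x, 0 < Q' x → x ∈ Z) ∧ c = MI Q' P}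

/-- `R_{−1}^{−}(Q)`. -/
noncomputable def Rm1minus {𝓧 𝓨 : Type*} [Fintype 𝓧] [Fintype 𝓨]
    (Q : 𝓧 → ℝ) (P : 𝓧 → 𝓨 → ℝ) : EReal :=
  sInf {v | ∃ V : 𝓨 → 𝓧 → ℝ, IsCondPMF V ∧ AdmissibleAtM1 Q P V ∧
    v = DTQ (Tm1 Q P) V Q}

/-- `R_{−1}^{+}(Q)`. -/
noncomputable def Rm1plus {𝓧 𝓨 : Type*} [Fintype 𝓧] [Fintype 𝓨]
    (Q : 𝓧 → ℝ) (P : 𝓧 → 𝓨 → ℝ) : EReal :=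
  sSup {v | ∃ V : 𝓨 → 𝓧 → ℝ, IsCondPMF V ∧ AdmissibleAtM1 Q P V ∧
    v = DTQ (Tm1 Q P) V Q}

/-- `F_ρ(T∘V, Q) = D(T∘V‖Q∘P) + ρ·D(T∘V‖T×Q)`. -/
noncomputable def Frho {𝓧 𝓨 : Type*} [Fintype 𝓧] [Fintype 𝓨]
    (ρ : ℝ) (T : 𝓨 → ℝ) (V : 𝓨 → 𝓧 → ℝ) (Q : 𝓧 → ℝ) (P : 𝓧 → 𝓨 → ℝ) : EReal :=
  DQP T V Q P + (ρ : EReal) * DTQ T V Q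

/-- the unconstrained penalized minimum
    `min_{T,V} { D(T∘V‖Q∘P) + ρ·(D(T∘V‖T×Q) − R) }`. -/
noncomputable def penMin {𝓧 𝓨 : Type*} [Fintype 𝓧] [Fintype 𝓨]
    (Q : 𝓧 → ℝ) (P : 𝓧 → 𝓨 → ℝ) (R ρ : ℝ) : EReal :=
  sInf {v | ∃ T : 𝓨 → ℝ, ∃ V : 𝓨 → 𝓧 → ℝ, IsPMF T ∧ IsCondPMF V ∧
    v = DQP T V Q P + (ρ : EReal) * (DTQ T V Q - (R : EReal))}

/-- the support-constrained penalized minimum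
    `min_{T,V : supp(V) ⊆ supp(Q)} { D(T∘V‖Q∘P) − ρ·(R − D(T∘V‖T×Q)) }`. -/
noncomputable def penMinS {𝓧 𝓨 : Type*} [Fintype 𝓧] [Fintype 𝓨]
    (Q : 𝓧 → ℝ) (P : 𝓧 → 𝓨 → ℝ) (R ρ : ℝ) : EReal :=
  sInf {v | ∃ T : 𝓨 → ℝ, ∃ V : 𝓨 → 𝓧 → ℝ, IsPMF T ∧ IsCondPMF V ∧
    (∀ y x, Q x = 0 → V y x = 0) ∧
    v = DQP T V Q P - (ρ : EReal) * ((R : EReal) - DTQ T V Q)}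

/-
Since `-ρ ∈ [0,1]`, we have `-ρ·a ≤ |a|⁺` for every `a`, with equality exactly under the stated
conditions on `a = R - D(T∘V‖T×Q)`; so the objective of `E_c^{ML}` dominates the penalized one
pointwise. A pair violating `supp(V) ⊆ supp(Q)` either has `D(T∘V‖Q∘P) = ∞` or violates it only
on outputs with `T(y) = 0`, where `V(·|y)` can be replaced by `Q` without changing either
divergence. As `E_c^{ML}` is finite, at a common minimizer the finite `D(T∘V‖Q∘P)` cancels,
leaving the equality case of `-ρ·a ≤ |a|⁺`.
-/

namespace EReal

lemma sum_ne_bot {ι : Type*} {s : Finset ι} {f : ι → EReal} (h : ∀ i ∈ s, f i ≠ ⊥) :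
    ∑ i ∈ s, f i ≠ ⊥ :=
  Finset.sum_induction f (· ≠ ⊥) (fun _ _ ha hb => by simp [add_eq_bot_iff, ha, hb])
    zero_ne_bot h

lemma sum_eq_top_iff {ι : Type*} {s : Finset ι} {f : ι → EReal} (h : ∀ i ∈ s, f i ≠ ⊥) :
    ∑ i ∈ s, f i = ⊤ ↔ ∃ i ∈ s, f i = ⊤ := by
  classical
  induction s using Finset.induction_on with
  | empty => simp
  | insert a s ha ih =>
    have hs : ∀ i ∈ s, f i ≠ ⊥ := fun i hi => h i (Finset.mem_insert_of_mem hi)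
    rw [Finset.sum_insert ha, Finset.exists_mem_insert, ← ih hs, ← not_iff_not, not_or,
      ← Ne, add_ne_top_iff_ne_top₂ (h a (Finset.mem_insert_self a s)) (sum_ne_bot hs)]

@[norm_cast]
lemma coe_max (a b : ℝ) : ((max a b : ℝ) : EReal) = max (a : EReal) b :=
  coe_strictMono.monotone.map_max

end EReal

lemma neg_mul_le_max {ρ : ℝ} (hρ : ρ ∈ Set.Icc (-1 : ℝ) 0) (a : EReal) :
    -(ρ * a) ≤ max a 0 := by
  obtain ⟨hρ₁, hρ₂⟩ := hρ
  rcases hρ₂.lt_or_eq with hρ₂ | rfl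
  · induction a using EReal.rec with
    | bot => simp [EReal.coe_mul_bot_of_neg hρ₂]
    | top => simp [EReal.coe_mul_top_of_neg hρ₂]
    | coe a =>
      norm_cast
      rcases le_total a 0 with h | h
      · rw [max_eq_right h]; nlinarith
      · rw [max_eq_left h]; nlinarith
  · simp

lemma neg_mul_sub_eq_max_iff {ρ : ℝ} (hρ : ρ ∈ Set.Icc (-1 : ℝ) 0) (R : ℝ) {D : EReal}
    (hD : D ≠ ⊥) :
    -(ρ * (R - D)) = max (R - D) 0 ↔
      (-1 < ρ → ρ < 0 → D = R) ∧ (ρ = 0 → R ≤ D) ∧ (ρ = -1 → D ≤ R) := by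
  obtain ⟨hρ₁, hρ₂⟩ := hρ
  induction D using EReal.rec with
  | bot => exact absurd rfl hD
  | top =>
    rcases hρ₂.lt_or_eq with hρ₂ | rfl
    · rcases hρ₁.eq_or_lt with rfl | hρ₁ <;> simp [EReal.coe_mul_bot_of_neg hρ₂, hρ₂.ne, hρ₂.not_ge, hρ₁]
    · simp
  | coe r =>
    have hcast : -((ρ : EReal) * (R - r)) = max ((R : EReal) - r) 0 ↔
        -(ρ * (R - r)) = max (R - r) 0 := by norm_cast
    rw [hcast, EReal.coe_eq_coe_iff, EReal.coe_le_coe_iff, EReal.coe_le_coe_iff]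
    rcases hρ₁.eq_or_lt with rfl | hρ₁
    · norm_num
    rcases hρ₂.lt_or_eq with hρ₂ | rfl
    · simp only [hρ₁, hρ₂, hρ₂.ne, hρ₁.ne', true_implies, false_implies, and_true]
      rcases le_total (R - r) 0 with h | h
      · rw [max_eq_right h]
        constructor <;> intro h'
        · exact le_antisymm (by nlinarith) (by linarith)
        · subst h'; simp
      · rw [max_eq_left h]
        constructor <;> intro h'
        · exact le_antisymm (by linarith) (by nlinarith)
        · subst h'; simp
    · simp

lemma klTerm_ne_bot (s t : ℝ) : klTerm s t ≠ ⊥ := by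
  unfold klTerm
  split_ifs <;> simp [-EReal.coe_mul]

lemma klTerm_eq_top_iff {s t : ℝ} : klTerm s t = ⊤ ↔ s ≠ 0 ∧ t = 0 := by
  unfold klTerm
  split_ifs <;> simp_all [-EReal.coe_mul]

lemma isPMF_single {α : Type*} [Fintype α] [DecidableEq α] (a : α) :
    IsPMF (Pi.single a 1 : α → ℝ) :=
  ⟨fun b => by by_cases h : b = a <;> simp [h], by simp⟩

section Divergences

variable {𝓧 𝓨 : Type*} [Fintype 𝓧] [Fintype 𝓨]
  {T : 𝓨 → ℝ} {V : 𝓨 → 𝓧 → ℝ} {Q : 𝓧 → ℝ} {P : 𝓧 → 𝓨 → ℝ}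

lemma DQP_ne_bot : DQP T V Q P ≠ ⊥ :=
  EReal.sum_ne_bot fun _ _ => EReal.sum_ne_bot fun _ _ => klTerm_ne_bot _ _

lemma DTQ_ne_bot : DTQ T V Q ≠ ⊥ :=
  EReal.sum_ne_bot fun _ _ => EReal.sum_ne_bot fun _ _ => klTerm_ne_bot _ _

lemma DQP_eq_top_iff : DQP T V Q P = ⊤ ↔ ∃ y x, T y * V y x ≠ 0 ∧ Q x * P x y = 0 := by
  simp only [DQP, EReal.sum_eq_top_iff fun _ _ => EReal.sum_ne_bot fun _ _ => klTerm_ne_bot _ _,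
    EReal.sum_eq_top_iff fun _ _ => klTerm_ne_bot _ _, klTerm_eq_top_iff, Finset.mem_univ,
    true_and]

lemma DQP_congr {V' : 𝓨 → 𝓧 → ℝ} (h : ∀ y x, T y * V y x = T y * V' y x) :
    DQP T V Q P = DQP T V' Q P := by
  simp only [DQP, h]

lemma DTQ_congr {V' : 𝓨 → 𝓧 → ℝ} (h : ∀ y x, T y * V y x = T y * V' y x) :
    DTQ T V Q = DTQ T V' Q := by
  simp only [DTQ, h]

lemma EcML_le (R : ℝ) (hT : IsPMF T) (hV : IsCondPMF V) :
    EcML R Q P ≤ DQP T V Q P + max ((R : EReal) - DTQ T V Q) 0 :=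
  sInf_le ⟨T, V, hT, hV, rfl⟩

lemma penMinS_le (R ρ : ℝ) (hQ : IsPMF Q) (hT : IsPMF T) (hV : IsCondPMF V)
    (hfin : DQP T V Q P ≠ ⊤) :
    penMinS Q P R ρ ≤ DQP T V Q P - (ρ : EReal) * ((R : EReal) - DTQ T V Q) := by
  classical
  set V' : 𝓨 → 𝓧 → ℝ := fun y => if T y = 0 then Q else V y with hV'
  have hTV : ∀ y x, T y * V' y x = T y * V y x := by
    intro y x
    by_cases h : T y = 0 <;> simp [hV', h]
  have hV'pmf : IsCondPMF V' := fun y => by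
    by_cases h : T y = 0 <;> simp [hV', h, hQ, hV y]
  have hsupp : ∀ y x, Q x = 0 → V' y x = 0 := by
    intro y x hx
    by_cases h : T y = 0
    · simp [hV', h, hx]
    · have hTVx : T y * V y x = 0 := by
        by_contra hne
        exact hfin (DQP_eq_top_iff.2 ⟨y, x, hne, by simp [hx]⟩)
      simpa [hV', h] using hTVx
  rw [← DQP_congr hTV, ← DTQ_congr hTV]
  exact sInf_le ⟨T, V', hT, hV'pmf, hsupp, rfl⟩

end Divergences

section Exponents

variable {𝓧 𝓨 : Type*} [Fintype 𝓧] [Fintype 𝓨] {Q : 𝓧 → ℝ} {P : 𝓧 → 𝓨 → ℝ}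

lemma max_sub_DTQ_ne_bot (R : ℝ) (T : 𝓨 → ℝ) (V : 𝓨 → 𝓧 → ℝ) :
    max ((R : EReal) - DTQ T V Q) 0 ≠ ⊥ :=
  ne_bot_of_le_ne_bot EReal.zero_ne_bot (le_max_right _ _)

lemma max_sub_DTQ_ne_top (R : ℝ) (T : 𝓨 → ℝ) (V : 𝓨 → 𝓧 → ℝ) :
    max ((R : EReal) - DTQ T V Q) 0 ≠ ⊤ := by
  refine max_ne_top ?_ EReal.zero_ne_top
  rw [sub_eq_add_neg]
  exact EReal.add_ne_top (EReal.coe_ne_top R) (EReal.neg_eq_top_iff.not.2 DTQ_ne_bot)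

lemma EcML_ne_top (hP : IsChannel P) (hQ : IsPMF Q) (R : ℝ) : EcML R Q P ≠ ⊤ := by
  classical
  obtain ⟨x₀, -, hx₀⟩ := Finset.exists_ne_zero_of_sum_ne_zero (hQ.2 ▸ one_ne_zero)
  obtain ⟨y₀, -, hy₀⟩ := Finset.exists_ne_zero_of_sum_ne_zero ((hP x₀).2 ▸ one_ne_zero)
  have hfin : DQP (Pi.single y₀ 1) (fun _ => Pi.single x₀ 1) Q P ≠ ⊤ := by
    rw [Ne, DQP_eq_top_iff]
    rintro ⟨y, x, hne, hzero⟩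
    obtain rfl : y = y₀ := by by_contra h; simp [h] at hne
    obtain rfl : x = x₀ := by by_contra h; simp [h] at hne
    exact mul_ne_zero hx₀ hy₀ hzero
  exact ne_top_of_le_ne_top (EReal.add_ne_top hfin (max_sub_DTQ_ne_top R _ _))
    (EcML_le R (isPMF_single y₀) fun _ => isPMF_single x₀)

lemma penMinS_le_EcML (hQ : IsPMF Q) (R : ℝ) {ρ : ℝ} (hρ : ρ ∈ Set.Icc (-1 : ℝ) 0) :
    penMinS Q P R ρ ≤ EcML R Q P := by
  refine le_sInf ?_
  rintro v ⟨T, V, hT, hV, rfl⟩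
  by_cases hfin : DQP T V Q P = ⊤
  · rw [hfin, EReal.top_add_of_ne_bot (max_sub_DTQ_ne_bot R T V)]
    exact le_top
  · refine (penMinS_le R ρ hQ hT hV hfin).trans ?_
    rw [sub_eq_add_neg]
    exact add_le_add_right (neg_mul_le_max hρ _) _

end Exponents

theorem stmt_6_general {𝓧 𝓨 : Type*} [Fintype 𝓧] [Fintype 𝓨]
    (P : 𝓧 → 𝓨 → ℝ) (hP : IsChannel P) (Q : 𝓧 → ℝ) (hQ : IsPMF Q)
    (R ρ : ℝ) (hρ : ρ ∈ Set.Icc (-1 : ℝ) 0) :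
    penMinS Q P R ρ ≤ EcML R Q P
    ∧ (EcML R Q P = penMinS Q P R ρ →
        ∀ (T : 𝓨 → ℝ) (V : 𝓨 → 𝓧 → ℝ), IsPMF T → IsCondPMF V →
          DQP T V Q P + max ((R : EReal) - DTQ T V Q) 0 = EcML R Q P →
          DQP T V Q P - (ρ : EReal) * ((R : EReal) - DTQ T V Q) = penMinS Q P R ρ
          ∧ (-1 < ρ → ρ < 0 → DTQ T V Q = (R : EReal))
          ∧ (ρ = 0 → (R : EReal) ≤ DTQ T V Q)
          ∧ (ρ = -1 → DTQ T V Q ≤ (R : EReal)))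
    ∧ (∀ (T : 𝓨 → ℝ) (V : 𝓨 → 𝓧 → ℝ), IsPMF T → IsCondPMF V →
        DQP T V Q P - (ρ : EReal) * ((R : EReal) - DTQ T V Q) = penMinS Q P R ρ →
        (-1 < ρ → ρ < 0 → DTQ T V Q = (R : EReal)) →
        (ρ = 0 → (R : EReal) ≤ DTQ T V Q) →
        (ρ = -1 → DTQ T V Q ≤ (R : EReal)) →
        DQP T V Q P + max ((R : EReal) - DTQ T V Q) 0 = EcML R Q P
        ∧ EcML R Q P = penMinS Q P R ρ) := by
  have hle : penMinS Q P R ρ ≤ EcML R Q P := penMinS_le_EcML hQ R hρ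
  refine ⟨hle, fun hEq T V hT hV hmin => ?_, fun T V hT hV hpen h₁ h₂ h₃ => ?_⟩
  · have hfin : DQP T V Q P ≠ ⊤ := fun htop => by
      rw [htop, EReal.top_add_of_ne_bot (max_sub_DTQ_ne_bot R T V)] at hmin
      exact EcML_ne_top hP hQ R hmin.symm
    have hpen : DQP T V Q P - (ρ : EReal) * ((R : EReal) - DTQ T V Q) = penMinS Q P R ρ := by
      refine le_antisymm ?_ (penMinS_le R ρ hQ hT hV hfin)
      rw [← hEq, ← hmin, sub_eq_add_neg]
      exact add_le_add_right (neg_mul_le_max hρ _) _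
    have hsum : DQP T V Q P + -((ρ : EReal) * ((R : EReal) - DTQ T V Q)) =
        DQP T V Q P + max ((R : EReal) - DTQ T V Q) 0 := by
      rw [← sub_eq_add_neg, hpen, ← hEq, hmin]
    rw [← EReal.coe_toReal hfin DQP_ne_bot, (EReal.addLECancellable_coe _).inj] at hsum
    exact ⟨hpen, (neg_mul_sub_eq_max_iff hρ R DTQ_ne_bot).1 hsum⟩
  · have hmax := (neg_mul_sub_eq_max_iff hρ R DTQ_ne_bot).2 ⟨h₁, h₂, h₃⟩
    have hobj : DQP T V Q P + max ((R : EReal) - DTQ T V Q) 0 = penMinS Q P R ρ := by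
      rw [← hmax, ← sub_eq_add_neg, hpen]
    have hEq : EcML R Q P = penMinS Q P R ρ := le_antisymm (hobj ▸ EcML_le R hT hV) hle
    exact ⟨hobj.trans hEq.symm, hEq⟩

theorem stmt_6 {𝓧 𝓨 : Type*} [Fintype 𝓧] [Fintype 𝓨] [Nonempty 𝓧] [Nonempty 𝓨]
    (P : 𝓧 → 𝓨 → ℝ) (hP : IsChannel P) (Q : 𝓧 → ℝ) (hQ : IsPMF Q)
    (R ρ : ℝ) (hρ : ρ ∈ Set.Icc (-1 : ℝ) 0) :
    penMinS Q P R ρ ≤ EcML R Q P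
    ∧ (EcML R Q P = penMinS Q P R ρ →
        ∀ (T : 𝓨 → ℝ) (V : 𝓨 → 𝓧 → ℝ), IsPMF T → IsCondPMF V →
          DQP T V Q P + max ((R : EReal) - DTQ T V Q) 0 = EcML R Q P →
          DQP T V Q P - (ρ : EReal) * ((R : EReal) - DTQ T V Q) = penMinS Q P R ρ
          ∧ (-1 < ρ → ρ < 0 → DTQ T V Q = (R : EReal))
          ∧ (ρ = 0 → (R : EReal) ≤ DTQ T V Q)
          ∧ (ρ = -1 → DTQ T V Q ≤ (R : EReal)))
    ∧ (∀ (T : 𝓨 → ℝ) (V : 𝓨 → 𝓧 → ℝ), IsPMF T → IsCondPMF V →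
        DQP T V Q P - (ρ : EReal) * ((R : EReal) - DTQ T V Q) = penMinS Q P R ρ →
        (-1 < ρ → ρ < 0 → DTQ T V Q = (R : EReal)) →
        (ρ = 0 → (R : EReal) ≤ DTQ T V Q) →
        (ρ = -1 → DTQ T V Q ≤ (R : EReal)) →
        DQP T V Q P + max ((R : EReal) - DTQ T V Q) 0 = EcML R Q P
        ∧ EcML R Q P = penMinS Q P R ρ) :=
  stmt_6_general P hP Q hQ R ρ hρ
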